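/- arXiv:2106.10346 — 2 statements merged into one kernel-verified Lean document; each statement's English description precedes it below -/
import Mathlib

section
/- For the helicoid ψ(u,v) = cos(v/r)α(u) + r sin(v/r)Z(u) in S^3(r) with α(u) = r(cos(u/r), sin(u/r), 0, 0) and Z(u) = (0, 0, cos(ωu), sin(ωu)), the mixed partial inner products satisfy ⟨ψ_u, ψ_v⟩ = 0, and the mean curvature coefficient h₁₁ = ⟨ψ_uu + (g₁₁/r²)ψ, ξ⟩ vanishes, where ξ is proportional to the vector characterized by ⟨ξ, x⟩ ∝ det(ψ, ψ_u, ψ_v, x). Hence the helicoid is a minimal surface in S^3(r). -/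
noncomputable def dot4 (u v : Fin 4 → ℝ) : ℝ := ∑ i, u i * v i

/-! Both coordinate slices of the helicoid are uniform circular motions
`t ↦ cos (k t) • p + sin (k t) • q`, whose acceleration is `-k²` times the position.
So `ψ_uu`, and with it `ψ_uu + λ ψ` for every `λ`, lies in the plane spanned by `α(u)` and `Z(u)`.
The curve `v ↦ ψ(u, v)` is a circle in that same plane, so a vector orthogonal to `ψ` and `ψ_v`
is orthogonal to the whole plane, and `h₁₁ = 0`. The vanishing of `g₁₂` is a direct computation. -/

open Real

noncomputable def circleCurve {E : Type*} [AddCommGroup E] [Module ℝ E] (p q : E) (k t : ℝ) : E :=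
  cos (k * t) • p + sin (k * t) • q

section circleCurve

variable {E : Type*} [NormedAddCommGroup E] [NormedSpace ℝ E]

theorem hasDerivAt_circleCurve (p q : E) (k t : ℝ) :
    HasDerivAt (circleCurve p q k) (circleCurve (k • q) (-(k • p)) k t) t := by
  have hkt : HasDerivAt (fun t => k * t) k t := by simpa using (hasDerivAt_id t).const_mul k
  refine ((hkt.cos.smul_const p).add (hkt.sin.smul_const q)).congr_deriv ?_
  simp only [circleCurve]
  module

theorem differentiable_circleCurve (p q : E) (k : ℝ) : Differentiable ℝ (circleCurve p q k) :=
  fun t => (hasDerivAt_circleCurve p q k t).differentiableAt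

theorem deriv_circleCurve (p q : E) (k : ℝ) :
    deriv (circleCurve p q k) = circleCurve (k • q) (-(k • p)) k :=
  funext fun t => (hasDerivAt_circleCurve p q k t).deriv

theorem deriv_deriv_circleCurve (p q : E) (k : ℝ) :
    deriv (deriv (circleCurve p q k)) = -k ^ 2 • circleCurve p q k := by
  funext t
  simp only [deriv_circleCurve, circleCurve, Pi.smul_apply, smul_add, smul_neg, smul_smul]
  module

theorem cos_div_smul_add_mul_sin_div_smul (x y : E) (r t : ℝ) :
    cos (t / r) • x + (r * sin (t / r)) • y = circleCurve x (r • y) r⁻¹ t := by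
  rw [circleCurve, inv_mul_eq_div, mul_smul, smul_comm r]

theorem deriv_smul_add_smul {a b : ℝ → E} (ha : Differentiable ℝ a) (hb : Differentiable ℝ b)
    (c d : ℝ) : deriv (fun t => c • a t + d • b t) = fun t => c • deriv a t + d • deriv b t :=
  funext fun t => (((ha t).hasDerivAt.const_smul c).add ((hb t).hasDerivAt.const_smul d)).deriv

theorem deriv_deriv_smul_circleCurve_add_smul_circleCurve (p₁ q₁ p₂ q₂ : E) (k₁ k₂ c d : ℝ) :
    deriv (deriv fun t => c • circleCurve p₁ q₁ k₁ t + d • circleCurve p₂ q₂ k₂ t) =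
      fun t => c • (-k₁ ^ 2 • circleCurve p₁ q₁ k₁ t) + d • (-k₂ ^ 2 • circleCurve p₂ q₂ k₂ t) := by
  have hd₁ : Differentiable ℝ (deriv (circleCurve p₁ q₁ k₁)) := by
    rw [deriv_circleCurve]; exact differentiable_circleCurve _ _ _
  have hd₂ : Differentiable ℝ (deriv (circleCurve p₂ q₂ k₂)) := by
    rw [deriv_circleCurve]; exact differentiable_circleCurve _ _ _
  rw [deriv_smul_add_smul (differentiable_circleCurve _ _ _) (differentiable_circleCurve _ _ _),
    deriv_smul_add_smul hd₁ hd₂, deriv_deriv_circleCurve, deriv_deriv_circleCurve]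
  rfl

end circleCurve

theorem dotProduct_eq_zero_of_circleCurve {m : Type*} [Fintype m] {p q ξ : m → ℝ} {k t : ℝ}
    (hk : k ≠ 0) (h₀ : ξ ⬝ᵥ circleCurve p q k t = 0)
    (h₁ : ξ ⬝ᵥ circleCurve (k • q) (-(k • p)) k t = 0) : ξ ⬝ᵥ p = 0 ∧ ξ ⬝ᵥ q = 0 := by
  simp only [circleCurve, dotProduct_add, dotProduct_smul, dotProduct_neg, smul_eq_mul] at h₀ h₁
  have h₁' : cos (k * t) * (ξ ⬝ᵥ q) - sin (k * t) * (ξ ⬝ᵥ p) = 0 := by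
    apply mul_left_cancel₀ hk
    linear_combination h₁
  have hcs := sin_sq_add_cos_sq (k * t)
  constructor
  · linear_combination cos (k * t) * h₀ - sin (k * t) * h₁' - (ξ ⬝ᵥ p) * hcs
  · linear_combination sin (k * t) * h₀ + cos (k * t) * h₁' - (ξ ⬝ᵥ q) * hcs

theorem dot4_eq_dotProduct (x y : Fin 4 → ℝ) : dot4 x y = x ⬝ᵥ y := rfl

/-- the helicoid `ψ(u,v) = cos(v/r)α(u) + r sin(v/r)Z(u)` in `S³(r)`, with
`α(u) = r(cos(u/r), sin(u/r), 0, 0)` and `Z(u) = (0, 0, cos(ωu), sin(ωu))`, satisfies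
`g₁₂ = ⟨ψ_u, ψ_v⟩ = 0` and `h₁₁ = ⟨ψ_uu + (g₁₁/r²)ψ, ξ⟩ = 0` for any normal `ξ`
(`ξ` orthogonal to `ψ, ψ_u, ψ_v`); hence the helicoid is minimal. -/
theorem helicoid_minimal (r ω : ℝ) (hr : 0 < r) :
    let α : ℝ → Fin 4 → ℝ :=
      fun u => ![r * Real.cos (u / r), r * Real.sin (u / r), 0, 0]
    let Z : ℝ → Fin 4 → ℝ :=
      fun u => ![0, 0, Real.cos (ω * u), Real.sin (ω * u)]
    let ψ : ℝ → ℝ → Fin 4 → ℝ :=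
      fun u v => Real.cos (v / r) • α u + (r * Real.sin (v / r)) • Z u
    ∀ u v,
      dot4 (deriv (fun t => ψ t v) u) (deriv (fun t => ψ u t) v) = 0 ∧
      ∀ ξ : Fin 4 → ℝ,
        dot4 ξ (ψ u v) = 0 → dot4 ξ (deriv (fun t => ψ t v) u) = 0 →
        dot4 ξ (deriv (fun t => ψ u t) v) = 0 →
        dot4 (deriv (deriv (fun t => ψ t v)) u
            + ((dot4 (deriv (fun t => ψ t v) u) (deriv (fun t => ψ t v) u) / r ^ 2))
              • ψ u v) ξ = 0 := by
  intro α Z ψ u v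
  have hα : α = circleCurve (r • ![1, 0, 0, 0]) (r • ![0, 1, 0, 0]) r⁻¹ := by
    funext t i; fin_cases i <;> simp [α, circleCurve, inv_mul_eq_div, mul_comm r]
  have hZ : Z = circleCurve ![0, 0, 1, 0] ![0, 0, 0, 1] ω := by
    funext t i; fin_cases i <;> simp [Z, circleCurve]
  have hψu : (fun t => ψ t v) = fun t => cos (v / r) • α t + (r * sin (v / r)) • Z t := rfl
  have hψv : ∀ t, ψ u t = circleCurve (α u) (r • Z u) r⁻¹ t :=
    cos_div_smul_add_mul_sin_div_smul (α u) (Z u) r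
  have hψuu : deriv (deriv fun t => ψ t v) u =
      cos (v / r) • (-r⁻¹ ^ 2 • α u) + (r * sin (v / r)) • (-ω ^ 2 • Z u) := by
    rw [hψu, hα, hZ, deriv_deriv_smul_circleCurve_add_smul_circleCurve]
  refine ⟨?_, fun ξ h₀ _ h₂ => ?_⟩
  · rw [hψu, funext hψv, hα, hZ, deriv_circleCurve,
      deriv_smul_add_smul (differentiable_circleCurve _ _ _) (differentiable_circleCurve _ _ _),
      deriv_circleCurve, deriv_circleCurve]
    simp only [dot4, circleCurve, Fin.sum_univ_four, Pi.add_apply, Pi.smul_apply, Pi.neg_apply,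
      smul_eq_mul, Matrix.cons_val_zero, Matrix.cons_val_one, Matrix.cons_val_two,
      Matrix.cons_val_three, Matrix.head_cons, Matrix.tail_cons]
    ring
  · rw [hψv] at h₀
    rw [funext hψv, deriv_circleCurve] at h₂
    obtain ⟨hξα, hξrZ⟩ := dotProduct_eq_zero_of_circleCurve (inv_ne_zero hr.ne') h₀ h₂
    have hξZ : ξ ⬝ᵥ Z u = 0 := by
      rw [dotProduct_smul, smul_eq_mul] at hξrZ
      exact (mul_eq_zero.1 hξrZ).resolve_left hr.ne'
    rw [dot4_eq_dotProduct, dotProduct_comm, hψuu, hψv, circleCurve]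
    simp only [dotProduct_add, dotProduct_smul, hξα, hξZ, smul_eq_mul, mul_zero, add_zero]
end

section
/- Let α : I → S^3(r) be a unit-speed curve and Z a unit tangent vector field along α. The curve β(u) = cos(v(u)/r)α(u) + r sin(v(u)/r)Z(u), with v(u) = (r/2)·arctan( −(2/r)⟨α', ∇_{α'}Z⟩ / (⟨∇_{α'}Z, ∇_{α'}Z⟩ − g(u,0)/r²) ), satisfies the striction condition ⟨β', ∇_{β'}PZ⟩ = 0, where PZ(u) = −(1/r)sin(v(u)/r)α(u) + cos(v(u)/r)Z(u) and g(u,0) = 1 − ⟨α'(u),Z(u)⟩². -/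
/-!
Write `β = cos θ • α + r sin θ • Z` with `θ = v / r`, and `P` for `PZ = (1/r) ∂β/∂θ`. Along the
curve, `|β| = r`, `|P| = 1` and `β ⊥ P`, so `β' ⊥ β` kills the Gauss-formula term of `∇_{β'}P`, and
in `⟪β', P'⟫` every contribution of `θ'` cancels. What remains is the same expression with `α`, `Z`
replaced by `α'`, `Z'`, namely `⟪α', Z'⟫ cos 2θ + (r/2) (|Z'|² - 1/r²) sin 2θ`. Since
`⟪α', ∇_{α'}Z⟫ = ⟪α', Z'⟫` and the denominator in `v` equals `|Z'|² - 1/r²`, the choice of `v` makes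
`2θ` the arctangent at which this expression vanishes.
-/

open Real
open scoped RealInnerProductSpace

theorem mul_cos_arctan_add_mul_sin_arctan (p q : ℝ) (hq : q ≠ 0) :
    p * cos (arctan (-p / q)) + q * sin (arctan (-p / q)) = 0 := by
  rw [cos_arctan, sin_arctan]
  field_simp
  ring

noncomputable section

variable {E : Type*}

/-- `greatCirclePoint r a b θ` lies at arc length `r θ` from `a` on the great circle of radius `r`
leaving `a` with unit velocity `b`; `greatCircleTangent r a b θ` is its unit velocity there (the
parallel transport of `b`). These are the paper's `β` and `PZ` for `θ = v / r`. -/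
def greatCirclePoint [AddCommGroup E] [Module ℝ E] (r : ℝ) (a b : E) (θ : ℝ) : E :=
  cos θ • a + (r * sin θ) • b

def greatCircleTangent [AddCommGroup E] [Module ℝ E] (r : ℝ) (a b : E) (θ : ℝ) : E :=
  (-(1 / r) * sin θ) • a + cos θ • b

section Deriv

variable [NormedAddCommGroup E] [NormedSpace ℝ E] {r : ℝ} {a b : ℝ → E} {θ : ℝ → ℝ}
  {a' b' : E} {θ' u : ℝ}

theorem hasDerivAt_greatCirclePoint (hr : r ≠ 0) (ha : HasDerivAt a a' u) (hb : HasDerivAt b b' u)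
    (hθ : HasDerivAt θ θ' u) :
    HasDerivAt (fun t => greatCirclePoint r (a t) (b t) (θ t))
      (greatCirclePoint r a' b' (θ u) + (r * θ') • greatCircleTangent r (a u) (b u) (θ u)) u := by
  unfold greatCirclePoint greatCircleTangent
  convert (hθ.cos.fun_smul ha).fun_add ((hθ.sin.const_mul r).fun_smul hb) using 1
  match_scalars <;> field_simp

theorem hasDerivAt_greatCircleTangent (hr : r ≠ 0) (ha : HasDerivAt a a' u)
    (hb : HasDerivAt b b' u) (hθ : HasDerivAt θ θ' u) :
    HasDerivAt (fun t => greatCircleTangent r (a t) (b t) (θ t))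
      (greatCircleTangent r a' b' (θ u) + (-(θ' / r)) • greatCirclePoint r (a u) (b u) (θ u))
      u := by
  unfold greatCirclePoint greatCircleTangent
  convert ((hθ.sin.const_mul (-(1 / r))).fun_smul ha).fun_add (hθ.cos.fun_smul hb) using 1
  match_scalars <;> field_simp

end Deriv

section Inner

variable [NormedAddCommGroup E] [InnerProductSpace ℝ E] {r : ℝ} {a b : E}

theorem inner_greatCirclePoint_greatCircleTangent (hr : r ≠ 0) (a b : E) (θ : ℝ) :
    ⟪greatCirclePoint r a b θ, greatCircleTangent r a b θ⟫ =
      ⟪a, b⟫ * cos (2 * θ) + r / 2 * (⟪b, b⟫ - ⟪a, a⟫ / r ^ 2) * sin (2 * θ) := by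
  simp only [greatCirclePoint, greatCircleTangent, inner_add_left, inner_add_right,
    real_inner_smul_left, real_inner_smul_right, real_inner_comm a b, cos_two_mul', sin_two_mul]
  field_simp
  ring

variable (ha : ⟪a, a⟫ = r ^ 2) (hb : ⟪b, b⟫ = 1) (hab : ⟪a, b⟫ = 0)
include ha hb hab

theorem inner_greatCirclePoint_self (θ : ℝ) :
    ⟪greatCirclePoint r a b θ, greatCirclePoint r a b θ⟫ = r ^ 2 := by
  simp only [greatCirclePoint, inner_add_left, inner_add_right, real_inner_smul_left,
    real_inner_smul_right, real_inner_comm a b, ha, hb, hab]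
  linear_combination r ^ 2 * sin_sq_add_cos_sq θ

theorem inner_greatCircleTangent_self (hr : r ≠ 0) (θ : ℝ) :
    ⟪greatCircleTangent r a b θ, greatCircleTangent r a b θ⟫ = 1 := by
  simp only [greatCircleTangent, inner_add_left, inner_add_right, real_inner_smul_left,
    real_inner_smul_right, real_inner_comm a b, ha, hb, hab]
  field_simp
  linear_combination r * sin_sq_add_cos_sq θ

theorem inner_greatCirclePoint_greatCircleTangent_eq_zero (hr : r ≠ 0) (θ : ℝ) :
    ⟪greatCirclePoint r a b θ, greatCircleTangent r a b θ⟫ = 0 := by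
  rw [inner_greatCirclePoint_greatCircleTangent hr, ha, hb, hab]
  field_simp
  ring

end Inner

section Frame

variable [NormedAddCommGroup E] [InnerProductSpace ℝ E] {f g : ℝ → E} {f' g' : E} {u : ℝ}

theorem inner_deriv_eq_neg_of_inner_const (hf : HasDerivAt f f' u) (hg : HasDerivAt g g' u)
    {c : ℝ} (hfg : ∀ t, ⟪f t, g t⟫ = c) : ⟪f', g u⟫ = -⟪f u, g'⟫ := by
  have h := hf.inner ℝ hg
  rw [show (fun t => ⟪f t, g t⟫) = fun _ => c from funext hfg] at h
  linarith [h.unique (hasDerivAt_const u c)]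

theorem inner_deriv_self_eq_zero_of_inner_self_const (hf : HasDerivAt f f' u) {c : ℝ}
    (hff : ∀ t, ⟪f t, f t⟫ = c) : ⟪f', f u⟫ = 0 := by
  have h := inner_deriv_eq_neg_of_inner_const hf hf hff
  rw [real_inner_comm] at h ⊢
  linarith

theorem inner_deriv_deriv_add_smul_eq_of_inner_self_const {β P : ℝ → E} {X Y : E} {k l R S : ℝ}
    (hβ : HasDerivAt β (X + k • P u) u) (hP : HasDerivAt P (Y + l • β u) u)
    (hββ : ∀ t, ⟪β t, β t⟫ = R) (hPP : ∀ t, ⟪P t, P t⟫ = S) (hβP : ⟪β u, P u⟫ = 0) (c : ℝ) :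
    ⟪deriv β u, deriv P u + c • β u⟫ = ⟪X, Y⟫ := by
  have hβ' := inner_deriv_self_eq_zero_of_inner_self_const hβ hββ
  have hP' := inner_deriv_self_eq_zero_of_inner_self_const hP hPP
  rw [hβ.deriv, hP.deriv]
  rw [real_inner_comm (P u) (β u)] at hβP
  simp only [inner_add_left, inner_add_right, real_inner_smul_left, real_inner_smul_right,
    real_inner_comm (P u) Y, real_inner_comm (P u) (β u)] at hβ' hP' ⊢
  linear_combination (l + c) * hβ' + k * hP' - k * l * hβP

end Frame

section Sphere

variable [NormedAddCommGroup E] [InnerProductSpace ℝ E] {r : ℝ} {α Z : ℝ → E} {u : ℝ}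

/-- `∇_{γ'}X` for a vector field `X` tangent to the sphere of radius `r` along a curve `γ` on it
(Gauss formula). -/
def sphereCovariantDeriv (r : ℝ) (γ X : ℝ → E) (u : ℝ) : E :=
  deriv X u + ((1 / r ^ 2) * ⟪deriv γ u, X u⟫) • γ u

/-- The paper's `v(u)`. -/
def strictionParameter (r : ℝ) (α Z : ℝ → E) (u : ℝ) : ℝ :=
  (r / 2) * arctan (-(2 / r) * ⟪deriv α u, sphereCovariantDeriv r α Z u⟫ /
    (⟪sphereCovariantDeriv r α Z u, sphereCovariantDeriv r α Z u⟫ -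
      (1 - ⟪deriv α u, Z u⟫ ^ 2) / r ^ 2))

theorem inner_deriv_sphereCovariantDeriv (hα : ⟪deriv α u, α u⟫ = 0) :
    ⟪deriv α u, sphereCovariantDeriv r α Z u⟫ = ⟪deriv α u, deriv Z u⟫ := by
  simp [sphereCovariantDeriv, inner_add_right, real_inner_smul_right, hα]

theorem inner_sphereCovariantDeriv_self_sub (hr : r ≠ 0) (hα : ⟪α u, α u⟫ = r ^ 2)
    (hZα : ⟪deriv Z u, α u⟫ = -⟪deriv α u, Z u⟫) :
    ⟪sphereCovariantDeriv r α Z u, sphereCovariantDeriv r α Z u⟫ -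
      (1 - ⟪deriv α u, Z u⟫ ^ 2) / r ^ 2 = ⟪deriv Z u, deriv Z u⟫ - 1 / r ^ 2 := by
  simp only [sphereCovariantDeriv, inner_add_left, inner_add_right, real_inner_smul_left,
    real_inner_smul_right, real_inner_comm (deriv Z u) (α u), hα, hZα]
  field_simp
  ring

theorem two_mul_strictionParameter_div (hr : r ≠ 0) (hα : ⟪deriv α u, α u⟫ = 0)
    (hden : ⟪sphereCovariantDeriv r α Z u, sphereCovariantDeriv r α Z u⟫ -
      (1 - ⟪deriv α u, Z u⟫ ^ 2) / r ^ 2 = ⟪deriv Z u, deriv Z u⟫ - 1 / r ^ 2) :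
    2 * (strictionParameter r α Z u / r) =
      arctan (-⟪deriv α u, deriv Z u⟫ / (r / 2 * (⟪deriv Z u, deriv Z u⟫ - 1 / r ^ 2))) := by
  rw [strictionParameter, inner_deriv_sphereCovariantDeriv hα, hden]
  field_simp

theorem differentiableAt_sphereCovariantDeriv (hα : DifferentiableAt ℝ α u)
    (hα' : DifferentiableAt ℝ (deriv α) u) (hZ : DifferentiableAt ℝ Z u)
    (hZ' : DifferentiableAt ℝ (deriv Z) u) :
    DifferentiableAt ℝ (sphereCovariantDeriv r α Z) u :=
  hZ'.add (((hα'.inner ℝ hZ).const_mul _).smul hα)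

theorem differentiableAt_strictionParameter (hα : DifferentiableAt ℝ α u)
    (hα' : DifferentiableAt ℝ (deriv α) u) (hZ : DifferentiableAt ℝ Z u)
    (hZ' : DifferentiableAt ℝ (deriv Z) u)
    (hden : ⟪sphereCovariantDeriv r α Z u, sphereCovariantDeriv r α Z u⟫ -
      (1 - ⟪deriv α u, Z u⟫ ^ 2) / r ^ 2 ≠ 0) :
    DifferentiableAt ℝ (strictionParameter r α Z) u := by
  have hD := differentiableAt_sphereCovariantDeriv (r := r) hα hα' hZ hZ'
  refine (((((hα'.inner ℝ hD).const_mul _).div ?_ hden).arctan).const_mul _)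
  exact (hD.inner ℝ hD).sub (((differentiableAt_const 1).sub ((hα'.inner ℝ hZ).pow 2)).div_const _)

theorem inner_deriv_sphereCovariantDeriv_greatCircle (hr : r ≠ 0) {θ : ℝ → ℝ} {α' Z' : E}
    {θ' : ℝ} (hα : HasDerivAt α α' u) (hZ : HasDerivAt Z Z' u) (hθ : HasDerivAt θ θ' u)
    (hsph : ∀ t, ⟪α t, α t⟫ = r ^ 2) (hZ1 : ∀ t, ⟪Z t, Z t⟫ = 1)
    (hαZ : ∀ t, ⟪α t, Z t⟫ = 0) :
    ⟪deriv (fun t => greatCirclePoint r (α t) (Z t) (θ t)) u,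
      sphereCovariantDeriv r (fun t => greatCirclePoint r (α t) (Z t) (θ t))
        (fun t => greatCircleTangent r (α t) (Z t) (θ t)) u⟫ =
      ⟪greatCirclePoint r α' Z' (θ u), greatCircleTangent r α' Z' (θ u)⟫ :=
  inner_deriv_deriv_add_smul_eq_of_inner_self_const (hasDerivAt_greatCirclePoint hr hα hZ hθ)
    (hasDerivAt_greatCircleTangent hr hα hZ hθ)
    (fun t => inner_greatCirclePoint_self (hsph t) (hZ1 t) (hαZ t) _)
    (fun t => inner_greatCircleTangent_self (hsph t) (hZ1 t) (hαZ t) hr _)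
    (inner_greatCirclePoint_greatCircleTangent_eq_zero (hsph u) (hZ1 u) (hαZ u) hr _) _

theorem inner_deriv_sphereCovariantDeriv_strictionCurve_eq_zero (hr : r ≠ 0)
    (hα : ContDiff ℝ 2 α) (hZ : ContDiff ℝ 2 Z) (hsph : ∀ t, ⟪α t, α t⟫ = r ^ 2)
    (hunit : ⟪deriv α u, deriv α u⟫ = 1) (hZ1 : ∀ t, ⟪Z t, Z t⟫ = 1)
    (hZα : ∀ t, ⟪Z t, α t⟫ = 0)
    (hden : ⟪sphereCovariantDeriv r α Z u, sphereCovariantDeriv r α Z u⟫ -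
      (1 - ⟪deriv α u, Z u⟫ ^ 2) / r ^ 2 ≠ 0) :
    let β := fun t => greatCirclePoint r (α t) (Z t) (strictionParameter r α Z t / r)
    let P := fun t => greatCircleTangent r (α t) (Z t) (strictionParameter r α Z t / r)
    ⟪deriv β u, sphereCovariantDeriv r β P u⟫ = 0 := by
  intro β P
  have hαd := hα.differentiable two_ne_zero
  have hZd := hZ.differentiable two_ne_zero
  have hαα' : ⟪deriv α u, α u⟫ = 0 :=
    inner_deriv_self_eq_zero_of_inner_self_const (hαd u).hasDerivAt hsph
  have hZ'α : ⟪deriv Z u, α u⟫ = -⟪deriv α u, Z u⟫ := by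
    rw [inner_deriv_eq_neg_of_inner_const (hZd u).hasDerivAt (hαd u).hasDerivAt hZα,
      real_inner_comm]
  have hden' := inner_sphereCovariantDeriv_self_sub hr (hsph u) hZ'α
  have hv := differentiableAt_strictionParameter (hαd u) (hα.differentiable_deriv_two u)
    (hZd u) (hZ.differentiable_deriv_two u) hden
  rw [inner_deriv_sphereCovariantDeriv_greatCircle hr (hαd u).hasDerivAt (hZd u).hasDerivAt
    (hv.div_const r).hasDerivAt hsph hZ1 (fun t => by rw [real_inner_comm]; exact hZα t),
    inner_greatCirclePoint_greatCircleTangent hr, hunit,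
    two_mul_strictionParameter_div hr hαα' hden']
  exact mul_cos_arctan_add_mul_sin_arctan _ _ (mul_ne_zero (by positivity) (hden' ▸ hden))

end Sphere

end

theorem dot4_eq_inner (x y : Fin 4 → ℝ) :
    dot4 x y = ⟪(WithLp.toLp 2 x : EuclideanSpace ℝ (Fin 4)), WithLp.toLp 2 y⟫ := by
  simp [dot4, PiLp.inner_apply, mul_comm]

theorem deriv_toLp {ι : Type*} [Fintype ι] (f : ℝ → ι → ℝ) (u : ℝ) :
    deriv (fun t => (WithLp.toLp 2 (f t) : EuclideanSpace ℝ ι)) u = WithLp.toLp 2 (deriv f u) := by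
  rw [← fderiv_apply_one_eq_deriv, ← fderiv_apply_one_eq_deriv]
  exact congrArg (· 1)
    ((PiLp.continuousLinearEquiv 2 ℝ (fun _ : ι => ℝ)).symm.comp_fderiv (f := f) (x := u))

/-- Prop. 3.4, existence of the striction curve: with
`∇_{α'}Z = Z' + (1/r²)⟨α',Z⟩α` (Gauss formula on `S³(r)`),
`v(u) = (r/2)arctan(−(2/r)⟨α',∇_{α'}Z⟩ / (⟨∇_{α'}Z,∇_{α'}Z⟩ − g(u,0)/r²))` where
`g(u,0) = 1 − ⟨α',Z⟩²` (the denominator being assumed nonzero), the curve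
`β(u) = cos(v(u)/r)α(u) + r sin(v(u)/r)Z(u)` satisfies the striction condition
`⟨β', ∇_{β'}PZ⟩ = 0`, where `PZ(u) = −(1/r)sin(v(u)/r)α(u) + cos(v(u)/r)Z(u)`. -/
theorem striction_curve_exists (r : ℝ) (hr : 0 < r) (α Z : ℝ → Fin 4 → ℝ)
    (hα : ContDiff ℝ 2 α) (hZ : ContDiff ℝ 2 Z)
    (hsph : ∀ u, dot4 (α u) (α u) = r ^ 2)
    (hunit : ∀ u, dot4 (deriv α u) (deriv α u) = 1)
    (hZ1 : ∀ u, dot4 (Z u) (Z u) = 1)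
    (hZα : ∀ u, dot4 (Z u) (α u) = 0) :
    let DZ : ℝ → Fin 4 → ℝ :=
      fun u => deriv Z u + ((1 / r ^ 2) * dot4 (deriv α u) (Z u)) • α u
    let v : ℝ → ℝ :=
      fun u => (r / 2) * Real.arctan (-(2 / r) * dot4 (deriv α u) (DZ u)
        / (dot4 (DZ u) (DZ u) - (1 - dot4 (deriv α u) (Z u) ^ 2) / r ^ 2))
    let β : ℝ → Fin 4 → ℝ :=
      fun u => Real.cos (v u / r) • α u + (r * Real.sin (v u / r)) • Z u
    let PZ : ℝ → Fin 4 → ℝ :=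
      fun u => (-(1 / r) * Real.sin (v u / r)) • α u + Real.cos (v u / r) • Z u
    (∀ u, dot4 (DZ u) (DZ u) - (1 - dot4 (deriv α u) (Z u) ^ 2) / r ^ 2 ≠ 0) →
    ∀ u, dot4 (deriv β u)
        (deriv PZ u + ((1 / r ^ 2) * dot4 (deriv β u) (PZ u)) • β u) = 0 := by
  intro DZ v β PZ hden u
  set A : ℝ → EuclideanSpace ℝ (Fin 4) := fun t => WithLp.toLp 2 (α t)
  set W : ℝ → EuclideanSpace ℝ (Fin 4) := fun t => WithLp.toLp 2 (Z t)
  have hDZ : ∀ t, WithLp.toLp 2 (DZ t) = sphereCovariantDeriv r A W t := fun t => by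
    simp [DZ, sphereCovariantDeriv, dot4_eq_inner, deriv_toLp, A, W]
  have hv : v = strictionParameter r A W := funext fun t => by
    simp [v, strictionParameter, dot4_eq_inner, ← hDZ, deriv_toLp, A, W]
  have key := inner_deriv_sphereCovariantDeriv_strictionCurve_eq_zero (α := A) (Z := W) (u := u)
    hr.ne'
    ((PiLp.continuousLinearEquiv 2 ℝ _).symm.contDiff.comp hα)
    ((PiLp.continuousLinearEquiv 2 ℝ _).symm.contDiff.comp hZ)
    (by simpa [dot4_eq_inner] using hsph) (by simpa [dot4_eq_inner, deriv_toLp, A] using hunit u)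
    (by simpa [dot4_eq_inner] using hZ1) (by simpa [dot4_eq_inner] using hZα)
    (by simpa [dot4_eq_inner, ← hDZ, deriv_toLp, A, W] using hden u)
  have hβ : ∀ t, WithLp.toLp 2 (β t) =
      greatCirclePoint r (A t) (W t) (strictionParameter r A W t / r) := fun t => by
    simp [β, greatCirclePoint, hv, A, W]
  have hPZ : ∀ t, WithLp.toLp 2 (PZ t) =
      greatCircleTangent r (A t) (W t) (strictionParameter r A W t / r) := fun t => by
    simp [PZ, greatCircleTangent, hv, A, W]
  simpa [sphereCovariantDeriv, ← funext hβ, ← funext hPZ, ← hβ u, ← hPZ u, deriv_toLp,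
    dot4_eq_inner] using key
end
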